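/- (Sum of homothety operators / Teichmüller addition) Let r_d(X,Y) be the integer-coefficient polynomials determined by (1 - Xt)(1 - Yt) = Π_{d≥1} (1 - r_d(X,Y) t^d), equivalently by X^n + Y^n = Σ_{d|n} d · r_d(X,Y)^{n/d} for all n ≥ 1. Then r_1(X,Y) = X + Y, r_2(X,Y) = -XY, and for the homothety operators ⟨u⟩a(t) = a(ut) on Λ(A) one has ⟨u⟩ + ⟨v⟩ = Σ_{n≥1} V_n ⟨r_n(u,v)⟩ f_n as additive operations. -/

import Mathlib

/-!
The ghost series `t f'/f` of a series with constant term 1 turns products into sums, and over a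
torsion-free ring it determines the series modulo every power of `t`. Its coefficients are the
ghost components `s_r`: `s_r(⟨u⟩a · ⟨v⟩a) = (u^r + v^r) s_r(a)` and
`s_r(V_n ⟨c⟩ f_n a) = n c^{r/n} s_r(a)` for `n ∣ r`, so on ghost components the identity is the
defining relation of the `r_d`. It therefore holds for the generic series over the torsion-free
ring `ℤ[a₁, a₂, …, u, v]`, and specializes to any ring.
The `r_d` are integral because they come from factoring `(1 - Xt)(1 - Yt)` as `∏ (1 - r_d t^d)`
one degree at a time, which needs no division.
-/

/-- The Verschiebung operator on `Λ(A) = 1 + tA⟦t⟧`: `V_k a(t) = a(t^k)`, written out on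
coefficients. -/
noncomputable def Vop (A : Type) [CommRing A] (k : ℕ) (g : PowerSeries A) :
    PowerSeries A :=
  PowerSeries.mk fun r => if k ∣ r then PowerSeries.coeff (r / k) g else 0

open PowerSeries

section Verschiebung

variable {A : Type} [CommRing A]

theorem coeff_Vop (k r : ℕ) (f : A⟦X⟧) :
    coeff r (Vop A k f) = if k ∣ r then coeff (r / k) f else 0 :=
  coeff_mk _ _

theorem constantCoeff_Vop (k : ℕ) (f : A⟦X⟧) : constantCoeff (Vop A k f) = constantCoeff f := by
  rw [← coeff_zero_eq_constantCoeff_apply, coeff_Vop, if_pos (dvd_zero k), Nat.zero_div,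
    coeff_zero_eq_constantCoeff_apply]

theorem Vop_eq_expand {k : ℕ} (hk : k ≠ 0) (f : A⟦X⟧) : Vop A k f = expand k hk f := by
  ext r
  rw [coeff_Vop, coeff_expand]

theorem map_Vop {B : Type} [CommRing B] (φ : A →+* B) (k : ℕ) (f : A⟦X⟧) :
    map φ (Vop A k f) = Vop B k (map φ f) := by
  ext r
  simp only [coeff_map, coeff_Vop, apply_ite φ, map_zero]

theorem Vop_rescale_one_sub_X {d : ℕ} (hd : d ≠ 0) (c : A) :
    Vop A d (rescale c (1 - X)) = 1 - C c * X ^ d := by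
  rw [Vop_eq_expand hd, map_sub, map_one, rescale_X, map_sub, map_one, map_mul, expand_C,
    expand_X]

end Verschiebung

theorem natCast_mul_cancel {R : Type*} [CommRing R] [IsAddTorsionFree R] {n : ℕ} (hn : n ≠ 0)
    {x y : R} (h : (n : R) * x = n * y) : x = y :=
  nsmul_right_injective hn (by simpa only [nsmul_eq_mul] using h)

namespace PowerSeries

variable {A : Type*} [CommRing A]

theorem constantCoeff_rescale (c : A) (f : A⟦X⟧) :
    constantCoeff (rescale c f) = constantCoeff f := by
  rw [← coeff_zero_eq_constantCoeff_apply, coeff_rescale, pow_zero, one_mul,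
    coeff_zero_eq_constantCoeff_apply]

noncomputable def eulerDeriv : Derivation A A⟦X⟧ A⟦X⟧ :=
  (X : A⟦X⟧) • d⁄dX A

theorem coeff_eulerDeriv (f : A⟦X⟧) (m : ℕ) : coeff m (eulerDeriv f) = m * coeff m f := by
  rw [eulerDeriv, Derivation.smul_apply, smul_eq_mul]
  rcases m with _ | m
  · simp
  · rw [coeff_succ_X_mul, coeff_derivative]
    push_cast
    ring

theorem eulerDeriv_eq_mk (f : A⟦X⟧) : eulerDeriv f = mk fun m => (m : A) * coeff m f := by
  ext m
  rw [coeff_eulerDeriv, coeff_mk]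

theorem eulerDeriv_rescale (c : A) (f : A⟦X⟧) :
    eulerDeriv (rescale c f) = rescale c (eulerDeriv f) := by
  ext m
  simp only [coeff_eulerDeriv, coeff_rescale]
  ring

theorem eulerDeriv_expand {k : ℕ} (hk : k ≠ 0) (f : A⟦X⟧) :
    eulerDeriv (expand k hk f) = k • expand k hk (eulerDeriv f) := by
  ext m
  rw [map_nsmul, coeff_eulerDeriv, coeff_expand, coeff_expand]
  split_ifs with hm
  · obtain ⟨q, rfl⟩ := hm
    rw [Nat.mul_div_cancel_left _ (Nat.pos_of_ne_zero hk), coeff_eulerDeriv, nsmul_eq_mul]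
    push_cast
    ring
  · simp

theorem X_pow_dvd_eulerDeriv {k : ℕ} {f : A⟦X⟧} (h : X ^ k ∣ f) : X ^ k ∣ eulerDeriv f := by
  rw [X_pow_dvd_iff] at h ⊢
  intro m hm
  rw [coeff_eulerDeriv, h m hm, mul_zero]

/-- The ghost series `t f'/f`; its coefficients are the ghost components `s_r f`. -/
noncomputable def ghost (f : A⟦X⟧) : A⟦X⟧ :=
  eulerDeriv f * invOfUnit f 1

variable {f g : A⟦X⟧}

theorem mul_invOfUnit_one (hf : constantCoeff f = 1) : f * invOfUnit f 1 = 1 :=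
  mul_invOfUnit f 1 (by simpa using hf)

theorem ghost_mul_self (hf : constantCoeff f = 1) : ghost f * f = eulerDeriv f := by
  rw [ghost, mul_assoc, mul_comm (invOfUnit f 1), mul_invOfUnit_one hf, mul_one]

theorem eq_ghost_of_mul_eq (hf : constantCoeff f = 1) {h : A⟦X⟧} (hh : h * f = eulerDeriv f) :
    h = ghost f := by
  rw [ghost, ← hh, mul_assoc, mul_invOfUnit_one hf, mul_one]

theorem constantCoeff_ghost (f : A⟦X⟧) : constantCoeff (ghost f) = 0 := by
  rw [ghost, map_mul, ← coeff_zero_eq_constantCoeff_apply, coeff_eulerDeriv, Nat.cast_zero,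
    zero_mul, zero_mul]

theorem ghost_one : ghost (1 : A⟦X⟧) = 0 :=
  (eq_ghost_of_mul_eq constantCoeff_one (by rw [zero_mul, Derivation.map_one_eq_zero])).symm

theorem ghost_mul (hf : constantCoeff f = 1) (hg : constantCoeff g = 1) :
    ghost (f * g) = ghost f + ghost g := by
  refine (eq_ghost_of_mul_eq (by rw [map_mul, hf, hg, mul_one]) ?_).symm
  rw [Derivation.leibniz, smul_eq_mul, smul_eq_mul, ← ghost_mul_self hf, ← ghost_mul_self hg]
  ring

theorem ghost_prod {ι : Type*} (s : Finset ι) (g : ι → A⟦X⟧)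
    (hg : ∀ i ∈ s, constantCoeff (g i) = 1) :
    ghost (∏ i ∈ s, g i) = ∑ i ∈ s, ghost (g i) := by
  induction s using Finset.cons_induction with
  | empty => simp [ghost_one]
  | cons a s ha ih =>
    rw [Finset.forall_mem_cons] at hg
    rw [Finset.prod_cons, Finset.sum_cons,
      ghost_mul hg.1 (by rw [map_prod]; exact Finset.prod_eq_one hg.2), ih hg.2]

theorem ghost_rescale (c : A) (hf : constantCoeff f = 1) :
    ghost (rescale c f) = rescale c (ghost f) := by
  refine (eq_ghost_of_mul_eq (by rw [constantCoeff_rescale, hf]) ?_).symm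
  rw [← map_mul, ghost_mul_self hf, eulerDeriv_rescale]

theorem ghost_expand {k : ℕ} (hk : k ≠ 0) (hf : constantCoeff f = 1) :
    ghost (expand k hk f) = k • expand k hk (ghost f) := by
  refine (eq_ghost_of_mul_eq (by rw [constantCoeff_expand, hf]) ?_).symm
  rw [smul_mul_assoc, ← map_mul, ghost_mul_self hf, eulerDeriv_expand]

theorem ghost_one_sub_X : ghost (1 - X : A⟦X⟧) = -(X * mk 1) := by
  refine (eq_ghost_of_mul_eq (by simp) ?_).symm
  rw [neg_mul, mul_assoc, mk_one_mul_one_sub_eq_one, mul_one, map_sub,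
    Derivation.map_one_eq_zero, eulerDeriv, Derivation.smul_apply, derivative_X, smul_eq_mul,
    mul_one, zero_sub]

theorem coeff_ghost_one_sub_X {m : ℕ} (hm : m ≠ 0) : coeff m (ghost (1 - X : A⟦X⟧)) = -1 := by
  obtain ⟨m, rfl⟩ := Nat.exists_eq_succ_of_ne_zero hm
  rw [ghost_one_sub_X, map_neg, coeff_succ_X_mul, coeff_mk, Pi.one_apply]

theorem coeff_ghost_rescale_one_sub_X (c : A) {m : ℕ} (hm : m ≠ 0) :
    coeff m (ghost (rescale c (1 - X))) = -c ^ m := by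
  rw [ghost_rescale c (by simp), coeff_rescale, coeff_ghost_one_sub_X hm, mul_neg_one]

theorem coeff_ghost_rescale_mul_rescale (u v : A) (hf : constantCoeff f = 1) (m : ℕ) :
    coeff m (ghost (rescale u f * rescale v f)) = (u ^ m + v ^ m) * coeff m (ghost f) := by
  rw [ghost_mul (by rw [constantCoeff_rescale, hf]) (by rw [constantCoeff_rescale, hf]),
    ghost_rescale u hf, ghost_rescale v hf, map_add, coeff_rescale, coeff_rescale, add_mul]

theorem ghost_eq_mk_mul (f : A⟦X⟧) :
    ghost f = (mk fun m => (m : A) * coeff m f) * invOfUnit f 1 := by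
  rw [ghost, eulerDeriv_eq_mk]

theorem eulerDeriv_sub (hf : constantCoeff f = 1) (hg : constantCoeff g = 1) :
    eulerDeriv (f - g) = ghost f * (f - g) + (ghost f - ghost g) * g := by
  rw [map_sub, ← ghost_mul_self hf, ← ghost_mul_self hg]
  ring

theorem X_pow_dvd_ghost_sub (hf : constantCoeff f = 1) (hg : constantCoeff g = 1) {k : ℕ}
    (h : X ^ k ∣ f - g) : X ^ k ∣ ghost f - ghost g := by
  have hmul : X ^ k ∣ (ghost f - ghost g) * g := by
    rw [eq_sub_of_add_eq' (eulerDeriv_sub hf hg).symm]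
    exact dvd_sub (X_pow_dvd_eulerDeriv h) (dvd_mul_of_dvd_right h _)
  simpa only [mul_assoc, mul_invOfUnit_one hg, mul_one] using
    dvd_mul_of_dvd_left hmul (invOfUnit g 1)

theorem X_pow_dvd_sub_of_X_pow_dvd_ghost_sub [IsAddTorsionFree A] (hf : constantCoeff f = 1)
    (hg : constantCoeff g = 1) {N : ℕ} (h : X ^ N ∣ ghost f - ghost g) : X ^ N ∣ f - g := by
  suffices ∀ k ≤ N, X ^ k ∣ f - g from this N le_rfl
  intro k hk
  induction k with
  | zero => simp
  | succ k ih =>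
    have hk' := ih (by omega)
    -- `θ (f - g) ≡ ghost f * (f - g) ≡ 0 mod t^(k+1)`, and its `k`-th coefficient is `k (f - g)_k`
    have hθ : X ^ (k + 1) ∣ eulerDeriv (f - g) := by
      rw [eulerDeriv_sub hf hg]
      refine dvd_add ?_ (dvd_mul_of_dvd_left ((pow_dvd_pow X hk).trans h) _)
      rw [pow_succ']
      exact mul_dvd_mul (X_dvd_iff.2 (constantCoeff_ghost f)) hk'
    rw [X_pow_dvd_iff] at hk' hθ ⊢
    intro m hm
    rcases Nat.lt_succ_iff_lt_or_eq.1 hm with hm | rfl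
    · exact hk' m hm
    · rcases eq_or_ne m 0 with rfl | hm0
      · rw [coeff_zero_eq_constantCoeff_apply, map_sub, hf, hg, sub_self]
      · have := hθ m (by omega)
        rw [coeff_eulerDeriv, ← mul_zero (m : A)] at this
        exact natCast_mul_cancel hm0 this

end PowerSeries

section WittProduct

variable {A : Type} [CommRing A]

theorem coeff_ghost_prod_Vop (g : ℕ → A⟦X⟧) (hg : ∀ n, constantCoeff (g n) = 1) {N i : ℕ}
    (hi : i ≠ 0) (hiN : i ≤ N) :
    coeff i (ghost (∏ n ∈ Finset.Icc 1 N, Vop A n (g n))) =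
      ∑ n ∈ i.divisors, n * coeff (i / n) (ghost (g n)) := by
  have hterm : ∀ n ∈ Finset.Icc 1 N, coeff i (ghost (Vop A n (g n))) =
      if n ∣ i then n * coeff (i / n) (ghost (g n)) else 0 := by
    intro n hn
    have hn0 : n ≠ 0 := by rw [Finset.mem_Icc] at hn; omega
    rw [Vop_eq_expand hn0, ghost_expand hn0 (hg n), map_nsmul, coeff_expand, nsmul_eq_mul]
    split_ifs <;> simp
  have hdiv : (Finset.Icc 1 N).filter (· ∣ i) = i.divisors := by
    ext n
    simp only [Finset.mem_filter, Finset.mem_Icc, Nat.mem_divisors]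
    constructor
    · rintro ⟨-, hn⟩
      exact ⟨hn, hi⟩
    · rintro ⟨hn, -⟩
      exact ⟨⟨Nat.pos_of_dvd_of_pos hn (by omega), (Nat.le_of_dvd (by omega) hn).trans hiN⟩, hn⟩
  rw [ghost_prod _ _ fun n _ => by rw [constantCoeff_Vop, hg], map_sum, Finset.sum_congr rfl hterm,
    ← Finset.sum_filter, hdiv]

end WittProduct

section Factorization

variable {A : Type} [CommRing A] (f : A⟦X⟧)

/-- The partial products `∏_{d ≤ n} (1 - b_d t^d)` of the factorization of `f`: the factor of
degree `n + 1` corrects the first coefficient in which `f` and the previous product differ. -/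
noncomputable def wittPartialProd : ℕ → A⟦X⟧
  | 0 => 1
  | n + 1 => wittPartialProd n *
      (1 - C (-coeff (n + 1) (f * invOfUnit (wittPartialProd n) 1)) * X ^ (n + 1))

/-- The coefficients `b_d` of the factorization `f = ∏_{d ≥ 1} (1 - b_d t^d)`, with `b_0 = 0`. -/
noncomputable def wittCoeff : ℕ → A
  | 0 => 0
  | n + 1 => -coeff (n + 1) (f * invOfUnit (wittPartialProd f n) 1)

theorem wittPartialProd_succ (n : ℕ) :
    wittPartialProd f (n + 1) = wittPartialProd f n * (1 - C (wittCoeff f (n + 1)) * X ^ (n + 1)) :=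
  rfl

theorem constantCoeff_wittPartialProd (n : ℕ) : constantCoeff (wittPartialProd f n) = 1 := by
  induction n with
  | zero => exact constantCoeff_one
  | succ n ih => simp [wittPartialProd_succ, ih]

theorem wittPartialProd_eq_prod (n : ℕ) :
    wittPartialProd f n = ∏ d ∈ Finset.Icc 1 n, Vop A d (rescale (wittCoeff f d) (1 - X)) := by
  induction n with
  | zero => rfl
  | succ n ih =>
    rw [wittPartialProd_succ, ih, Finset.prod_Icc_succ_top (by omega),
      Vop_rescale_one_sub_X n.succ_ne_zero]

theorem X_pow_dvd_sub_wittPartialProd (hf : constantCoeff f = 1) (n : ℕ) :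
    X ^ (n + 1) ∣ f - wittPartialProd f n := by
  induction n with
  | zero => rw [zero_add, pow_one, X_dvd_iff, map_sub, hf, constantCoeff_wittPartialProd, sub_self]
  | succ n ih =>
    set P := wittPartialProd f n
    have hP : constantCoeff P = 1 := constantCoeff_wittPartialProd f n
    obtain ⟨q, hq⟩ : X ^ (n + 1) ∣ f * invOfUnit P 1 - 1 := by
      rw [← mul_invOfUnit_one hP, ← sub_mul]
      exact dvd_mul_of_dvd_left ih _
    have hb : wittCoeff f (n + 1) = -constantCoeff q := by
      have h := congrArg (coeff (n + 1)) hq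
      rw [map_sub, coeff_one, if_neg n.succ_ne_zero, sub_zero, coeff_X_pow_mul', if_pos le_rfl,
        Nat.sub_self, coeff_zero_eq_constantCoeff_apply] at h
      rw [wittCoeff, h]
    have hfP : f = P + X ^ (n + 1) * q * P := by
      calc f = f * invOfUnit P 1 * P := by
            rw [mul_assoc, mul_comm (invOfUnit P 1), mul_invOfUnit_one hP, mul_one]
        _ = P + X ^ (n + 1) * q * P := by rw [eq_add_of_sub_eq hq]; ring
    have hdiff : f - wittPartialProd f (n + 1) = X ^ (n + 1) * (P * (q - C (constantCoeff q))) := by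
      rw [wittPartialProd_succ, hb, map_neg]
      nth_rw 1 [hfP]
      ring
    rw [hdiff, pow_succ]
    exact mul_dvd_mul_left _ (dvd_mul_of_dvd_right (X_dvd_iff.2 (by simp)) _)

theorem coeff_ghost_eq_sum_wittCoeff (hf : constantCoeff f = 1) {n : ℕ} (hn : n ≠ 0) :
    coeff n (ghost f) = -∑ d ∈ n.divisors, (d : A) * wittCoeff f d ^ (n / d) := by
  have h := X_pow_dvd_iff.1 (X_pow_dvd_ghost_sub hf (constantCoeff_wittPartialProd f n)
    (X_pow_dvd_sub_wittPartialProd f hf n)) n n.lt_succ_self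
  rw [map_sub, sub_eq_zero, wittPartialProd_eq_prod,
    coeff_ghost_prod_Vop _ (fun d => by simp) hn le_rfl] at h
  rw [h, ← Finset.sum_neg_distrib]
  refine Finset.sum_congr rfl fun d hd => ?_
  rw [coeff_ghost_rescale_one_sub_X _ (Nat.div_pos (Nat.divisor_le hd)
    (Nat.pos_of_mem_divisors hd)).ne', mul_neg]

end Factorization

section PowerSums

variable {R : Type*} [CommRing R]

/-- Equivalent to `(1 - xt)(1 - yt) = ∏_{d ≥ 1} (1 - r_d t^d)` (compare ghost components). -/
def PowerSumRelation (x y : R) (r : ℕ → R) : Prop :=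
  ∀ n : ℕ, 1 ≤ n → x ^ n + y ^ n = ∑ d ∈ n.divisors, (d : R) * r d ^ (n / d)

theorem powerSumRelation_wittCoeff {A : Type} [CommRing A] (x y : A) :
    PowerSumRelation x y (wittCoeff (rescale x (1 - X) * rescale y (1 - X))) := by
  intro n hn
  have hX : constantCoeff (1 - X : A⟦X⟧) = 1 := by simp
  have h := coeff_ghost_eq_sum_wittCoeff (rescale x (1 - X) * rescale y (1 - X))
    (by rw [map_mul, constantCoeff_rescale, constantCoeff_rescale, hX, mul_one]) (n := n)
    (by omega)
  rwa [coeff_ghost_rescale_mul_rescale x y hX, coeff_ghost_one_sub_X (by omega), mul_neg_one,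
    neg_inj] at h

namespace PowerSumRelation

variable {x y : R} {r : ℕ → R}

theorem map {S : Type*} [CommRing S] (φ : R →+* S) (h : PowerSumRelation x y r) :
    PowerSumRelation (φ x) (φ y) (φ ∘ r) := by
  intro n hn
  simp only [← map_pow, ← map_add, h n hn, map_sum, map_mul, map_natCast, Function.comp_apply]

theorem unique [IsAddTorsionFree R] {r' : ℕ → R} (h : PowerSumRelation x y r)
    (h' : PowerSumRelation x y r') (h0 : r 0 = r' 0) : r = r' := by
  funext n
  induction n using Nat.strong_induction_on with
  | _ n ih =>
    rcases eq_or_ne n 0 with rfl | hn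
    · exact h0
    have hsum := (h n (by omega)).symm.trans (h' n (by omega))
    have hmem : n ∈ n.divisors := Nat.mem_divisors_self n hn
    rw [← Finset.add_sum_erase _ _ hmem, ← Finset.add_sum_erase _ _ hmem,
      Finset.sum_congr rfl fun d hd => by
        rw [ih d (lt_of_le_of_ne (Nat.divisor_le (Finset.mem_of_mem_erase hd))
          (Finset.ne_of_mem_erase hd))],
      Nat.div_self (Nat.pos_of_ne_zero hn), pow_one, pow_one] at hsum
    exact natCast_mul_cancel hn (add_right_cancel hsum)

theorem apply_one (h : PowerSumRelation x y r) : r 1 = x + y := by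
  simpa using (h 1 le_rfl).symm

theorem apply_two [IsAddTorsionFree R] (h : PowerSumRelation x y r) : r 2 = -(x * y) := by
  have h2 := h 2 (by omega)
  rw [Nat.prime_two.divisors, Finset.sum_pair (by omega), h.apply_one] at h2
  refine natCast_mul_cancel two_ne_zero ?_
  push_cast at h2 ⊢
  linear_combination -h2

end PowerSumRelation

end PowerSums

section HomotheticSum

variable {A : Type} [CommRing A]

theorem X_pow_dvd_rescale_mul_rescale_sub_prod_Vop [IsAddTorsionFree A] {u v : A} {c : ℕ → A}
    (hc : PowerSumRelation u v c) {a : A⟦X⟧} (ha : constantCoeff a = 1) {G : ℕ → A⟦X⟧}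
    (hG : ∀ n, constantCoeff (G n) = 1)
    (hGghost : ∀ n m, coeff m (ghost (G n)) = coeff (n * m) (ghost a)) (N : ℕ) :
    X ^ (N + 1) ∣
      rescale u a * rescale v a - ∏ n ∈ Finset.Icc 1 N, Vop A n (rescale (c n) (G n)) := by
  have hfactor (n : ℕ) : constantCoeff (rescale (c n) (G n)) = 1 := by
    rw [constantCoeff_rescale, hG]
  refine X_pow_dvd_sub_of_X_pow_dvd_ghost_sub
    (by rw [map_mul, constantCoeff_rescale, constantCoeff_rescale, ha, mul_one])
    (by rw [map_prod]; exact Finset.prod_eq_one fun n _ => by rw [constantCoeff_Vop, hfactor])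
    (X_pow_dvd_iff.2 fun i hi => ?_)
  rw [map_sub, sub_eq_zero, coeff_ghost_rescale_mul_rescale u v ha]
  rcases eq_or_ne i 0 with rfl | hi0
  · simp only [coeff_zero_eq_constantCoeff_apply, constantCoeff_ghost, mul_zero]
  rw [coeff_ghost_prod_Vop _ hfactor hi0 (by omega), hc i (by omega), Finset.sum_mul]
  refine Finset.sum_congr rfl fun n hn => ?_
  rw [ghost_rescale _ (hG n), coeff_rescale, hGghost,
    Nat.mul_div_cancel' (Nat.dvd_of_mem_divisors hn)]
  ring

/-- The generic series `1 + a₁ t + a₂ t² + ⋯` over `ℤ[a₁, a₂, …, u_s (s ∈ σ)]`. -/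
noncomputable def genericSeries (σ : Type) : (MvPolynomial (ℕ ⊕ σ) ℤ)⟦X⟧ :=
  mk fun i => if i = 0 then 1 else MvPolynomial.X (Sum.inl i)

theorem constantCoeff_genericSeries (σ : Type) : constantCoeff (genericSeries σ) = 1 := by
  rw [← coeff_zero_eq_constantCoeff_apply, genericSeries, coeff_mk, if_pos rfl]

theorem map_aeval_genericSeries {σ : Type} {a : A⟦X⟧} (ha : constantCoeff a = 1) (w : σ → A) :
    map (MvPolynomial.aeval (R := ℤ) (Sum.elim (fun i => coeff i a) w) :
      MvPolynomial (ℕ ⊕ σ) ℤ →+* A)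
      (genericSeries σ) = a := by
  ext i
  rw [coeff_map, genericSeries, coeff_mk]
  split_ifs with hi
  · rw [hi, map_one, coeff_zero_eq_constantCoeff_apply, ha]
  · simp

end HomotheticSum

theorem stmt19_general
    (F : ∀ (A : Type) [CommRing A], ℕ → PowerSeries A → PowerSeries A)
    (hF1 : ∀ (A : Type) [CommRing A] (n : ℕ) (f : PowerSeries A),
      PowerSeries.constantCoeff f = 1 → PowerSeries.constantCoeff (F A n f) = 1)
    (hFfunc : ∀ (A B : Type) [CommRing A] [CommRing B] (φ : A →+* B) (n : ℕ)
      (f : PowerSeries A),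
      PowerSeries.map φ (F A n f) = F B n (PowerSeries.map φ f))
    (hFghost : ∀ (A : Type) [CommRing A] (n : ℕ) (f : PowerSeries A),
      PowerSeries.constantCoeff f = 1 → ∀ r : ℕ,
        PowerSeries.coeff r
            ((PowerSeries.mk fun m => (m : A) * PowerSeries.coeff m (F A n f)) *
              PowerSeries.invOfUnit (F A n f) 1) =
          PowerSeries.coeff (n * r)
            ((PowerSeries.mk fun m => (m : A) * PowerSeries.coeff m f) *
              PowerSeries.invOfUnit f 1)) :
    (∃! r : ℕ → MvPolynomial (Fin 2) ℤ,
      r 0 = 0 ∧ ∀ n : ℕ, 1 ≤ n →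
        (MvPolynomial.X 0 : MvPolynomial (Fin 2) ℤ) ^ n + MvPolynomial.X 1 ^ n =
          ∑ d ∈ Nat.divisors n, (d : MvPolynomial (Fin 2) ℤ) * r d ^ (n / d)) ∧
    ∀ r : ℕ → MvPolynomial (Fin 2) ℤ,
      (r 0 = 0 ∧ ∀ n : ℕ, 1 ≤ n →
        (MvPolynomial.X 0 : MvPolynomial (Fin 2) ℤ) ^ n + MvPolynomial.X 1 ^ n =
          ∑ d ∈ Nat.divisors n, (d : MvPolynomial (Fin 2) ℤ) * r d ^ (n / d)) →
      r 1 = MvPolynomial.X 0 + MvPolynomial.X 1 ∧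
      r 2 = -(MvPolynomial.X 0 * MvPolynomial.X 1) ∧
      ∀ (A : Type) [CommRing A] (u v : A) (a : PowerSeries A),
        PowerSeries.constantCoeff a = 1 →
        ∀ N j : ℕ, j ≤ N →
          PowerSeries.coeff j
              (PowerSeries.rescale u a * PowerSeries.rescale v a) =
            PowerSeries.coeff j
              (∏ n ∈ Finset.Icc 1 N,
                Vop A n (PowerSeries.rescale
                  (MvPolynomial.aeval ![u, v] (r n)) (F A n a))) := by
  refine ⟨⟨_, ⟨rfl, powerSumRelation_wittCoeff _ _⟩,
    fun r hr => PowerSumRelation.unique hr.2 (powerSumRelation_wittCoeff _ _) hr.1⟩, ?_⟩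
  rintro r ⟨-, hr⟩
  change PowerSumRelation _ _ r at hr
  refine ⟨hr.apply_one, hr.apply_two, fun A _ u v a ha N j hj => ?_⟩
  have ha₀ := constantCoeff_genericSeries (Fin 2)
  have hrT := hr.map (MvPolynomial.rename (R := ℤ) (Sum.inr : Fin 2 → ℕ ⊕ Fin 2)).toRingHom
  have hgeneric := X_pow_dvd_rescale_mul_rescale_sub_prod_Vop hrT ha₀
    (G := fun n => F _ n (genericSeries (Fin 2)))
    (fun n => hF1 _ n _ ha₀)
    (fun n m => by rw [ghost_eq_mk_mul, ghost_eq_mk_mul]; exact hFghost _ n _ ha₀ m) N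
  have hA := map_dvd (map (MvPolynomial.aeval (R := ℤ)
    (Sum.elim (fun i => coeff i a) ![u, v]) : MvPolynomial (ℕ ⊕ Fin 2) ℤ →+* A)) hgeneric
  simp only [map_pow, map_X, map_sub, map_mul, map_prod, ← rescale_map, map_Vop, hFfunc,
    map_aeval_genericSeries ha, AlgHom.toRingHom_eq_coe, RingHom.coe_coe, Function.comp_apply,
    MvPolynomial.rename_X, MvPolynomial.aeval_X, MvPolynomial.aeval_rename, Sum.elim_inr,
    Sum.elim_comp_inr, Matrix.cons_val_zero, Matrix.cons_val_one] at hA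
  rw [← sub_eq_zero, ← map_sub]
  exact X_pow_dvd_iff.1 hA j (by omega)

/-- Sum of homothety operators / Teichmüller addition.  There are unique
integer-coefficient polynomials `r_d(X,Y)` (`d ≥ 1`, normalized by `r_0 = 0`) with
`X^n + Y^n = Σ_{d∣n} d · r_d(X,Y)^{n/d}` for all `n ≥ 1`; they satisfy
`r_1 = X + Y`, `r_2 = -XY`, and for the homothety operators `⟨u⟩a(t) = a(ut)` on `Λ(A)`
one has `⟨u⟩ + ⟨v⟩ = Σ_{n≥1} V_n ⟨r_n(u,v)⟩ f_n` as additive operations (stated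
coefficientwise, with the infinite Witt sum truncated at level `N`).  Here `F` is the
Frobenius family, functorial, additive, preserving constant term 1, and characterized on
ghost components by `s_r(f_n a) = s_{nr}(a)`. -/
theorem stmt19
    (F : ∀ (A : Type) [CommRing A], ℕ → PowerSeries A → PowerSeries A)
    (hF1 : ∀ (A : Type) [CommRing A] (n : ℕ) (f : PowerSeries A),
      PowerSeries.constantCoeff f = 1 → PowerSeries.constantCoeff (F A n f) = 1)
    (hFadd : ∀ (A : Type) [CommRing A] (n : ℕ) (f g : PowerSeries A),
      PowerSeries.constantCoeff f = 1 → PowerSeries.constantCoeff g = 1 →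
      F A n (f * g) = F A n f * F A n g)
    (hFfunc : ∀ (A B : Type) [CommRing A] [CommRing B] (φ : A →+* B) (n : ℕ)
      (f : PowerSeries A),
      PowerSeries.map φ (F A n f) = F B n (PowerSeries.map φ f))
    (hFghost : ∀ (A : Type) [CommRing A] (n : ℕ) (f : PowerSeries A),
      PowerSeries.constantCoeff f = 1 → ∀ r : ℕ,
        PowerSeries.coeff r
            ((PowerSeries.mk fun m => (m : A) * PowerSeries.coeff m (F A n f)) *
              PowerSeries.invOfUnit (F A n f) 1) =
          PowerSeries.coeff (n * r)
            ((PowerSeries.mk fun m => (m : A) * PowerSeries.coeff m f) *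
              PowerSeries.invOfUnit f 1)) :
    (∃! r : ℕ → MvPolynomial (Fin 2) ℤ,
      r 0 = 0 ∧ ∀ n : ℕ, 1 ≤ n →
        (MvPolynomial.X 0 : MvPolynomial (Fin 2) ℤ) ^ n + MvPolynomial.X 1 ^ n =
          ∑ d ∈ Nat.divisors n, (d : MvPolynomial (Fin 2) ℤ) * r d ^ (n / d)) ∧
    ∀ r : ℕ → MvPolynomial (Fin 2) ℤ,
      (r 0 = 0 ∧ ∀ n : ℕ, 1 ≤ n →
        (MvPolynomial.X 0 : MvPolynomial (Fin 2) ℤ) ^ n + MvPolynomial.X 1 ^ n =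
          ∑ d ∈ Nat.divisors n, (d : MvPolynomial (Fin 2) ℤ) * r d ^ (n / d)) →
      r 1 = MvPolynomial.X 0 + MvPolynomial.X 1 ∧
      r 2 = -(MvPolynomial.X 0 * MvPolynomial.X 1) ∧
      ∀ (A : Type) [CommRing A] (u v : A) (a : PowerSeries A),
        PowerSeries.constantCoeff a = 1 →
        ∀ N j : ℕ, j ≤ N →
          PowerSeries.coeff j
              (PowerSeries.rescale u a * PowerSeries.rescale v a) =
            PowerSeries.coeff j
              (∏ n ∈ Finset.Icc 1 N,
                Vop A n (PowerSeries.rescale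
                  (MvPolynomial.aeval ![u, v] (r n)) (F A n a))) :=
  stmt19_general F hF1 hFfunc hFghost
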